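/- arXiv:1711.02199 — 2 statements merged into one kernel-verified Lean document; each statement's English description precedes it below -/
import Mathlib

section
/- (Discrete maximum principle) Let A be the N×N cell-centered finite difference Laplacian and let u_m solve u_{m+1} = e^{Δt A} u_m + ∫₀^{Δt} e^{(Δt-s)A} F(t_m + s) ds with u₀ = 0 and F(t) = ((ν/h²)ψ₁(t), 0, …, 0, (ν/h²)ψ₂(t))ᵀ. Then for all 1 ≤ j ≤ N and 1 ≤ m ≤ M, |u_m(j)| ≤ ((N+1-j)/(N+1))·|ψ₁|_T + (j/(N+1))·|ψ₂|_T, where |ψ|_T = max_{0 ≤ t ≤ T} |ψ(t)|. -/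
open Matrix

/-- Matrix exponential defined by its power series. -/
noncomputable def mexp {N : ℕ} (A : Matrix (Fin N) (Fin N) ℝ) : Matrix (Fin N) (Fin N) ℝ :=
  ∑' k : ℕ, (k.factorial : ℝ)⁻¹ • A ^ k

/-- The N×N cell-centered finite difference Laplacian. -/
noncomputable def lap (N : ℕ) (ν h : ℝ) : Matrix (Fin N) (Fin N) ℝ :=
  Matrix.of fun i j =>
    if i = j then -2 * ν / h ^ 2
    else if (i : ℕ) + 1 = (j : ℕ) ∨ (j : ℕ) + 1 = (i : ℕ) then ν / h ^ 2 else 0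

open NormedSpace

attribute [local instance] Matrix.linftyOpNormedRing Matrix.linftyOpNormedAlgebra

namespace Stmt7

variable {N : ℕ}

lemma mexp_eq (A : Matrix (Fin N) (Fin N) ℝ) : mexp A = exp A := by
  rw [exp_eq_tsum ℝ]; rfl

noncomputable def mvCLM (v : Fin N → ℝ) (j : Fin N) : Matrix (Fin N) (Fin N) ℝ →L[ℝ] ℝ :=
  LinearMap.toContinuousLinearMap
    { toFun := fun X => X.mulVec v j
      map_add' := fun X Y => by simp [Matrix.add_mulVec]
      map_smul' := fun r X => by simp [Matrix.smul_mulVec] }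

@[simp] lemma mvCLM_apply (v : Fin N → ℝ) (j : Fin N) (X : Matrix (Fin N) (Fin N) ℝ) :
    mvCLM v j X = X.mulVec v j := by
  simp [mvCLM]

noncomputable def entryCLM (i j : Fin N) : Matrix (Fin N) (Fin N) ℝ →L[ℝ] ℝ :=
  LinearMap.toContinuousLinearMap
    { toFun := fun X => X i j
      map_add' := fun _ _ => rfl
      map_smul' := fun _ _ => rfl }

@[simp] lemma entryCLM_apply (i j : Fin N) (X : Matrix (Fin N) (Fin N) ℝ) :
    entryCLM i j X = X i j := by
  simp [entryCLM]; rfl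

lemma exp_apply_eq_tsum (A : Matrix (Fin N) (Fin N) ℝ) (i j : Fin N) :
    exp A i j = ∑' k : ℕ, (k.factorial : ℝ)⁻¹ * (A ^ k) i j := by
  have h : HasSum (fun k : ℕ => (k.factorial : ℝ)⁻¹ • A ^ k) (exp A) := by
    have := expSeries_hasSum_exp (𝕂 := ℝ) A
    simp only [expSeries_apply_eq] at this
    exact this
  have h2 := (entryCLM i j).hasSum h
  simp only [entryCLM_apply, Matrix.smul_apply, smul_eq_mul] at h2
  exact h2.tsum_eq.symm

lemma pow_entry_nonneg {A : Matrix (Fin N) (Fin N) ℝ} (hA : ∀ i j, 0 ≤ A i j) (k : ℕ) :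
    ∀ i j, 0 ≤ (A ^ k) i j := by
  induction k with
  | zero =>
    intro i j
    rw [pow_zero, Matrix.one_apply]
    split <;> norm_num
  | succ k ih =>
    intro i j
    rw [pow_succ, Matrix.mul_apply]
    exact Finset.sum_nonneg fun l _ => mul_nonneg (ih i l) (hA l j)

lemma exp_entry_nonneg {A : Matrix (Fin N) (Fin N) ℝ} (hA : ∀ i j, 0 ≤ A i j) (i j : Fin N) :
    0 ≤ exp A i j := by
  rw [exp_apply_eq_tsum]
  exact tsum_nonneg fun k => mul_nonneg (by positivity) (pow_entry_nonneg hA k i j)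

lemma exp_entry_nonneg_shift (A : Matrix (Fin N) (Fin N) ℝ) (c : ℝ)
    (hA : ∀ i j, 0 ≤ (A + c • (1 : Matrix (Fin N) (Fin N) ℝ)) i j) (i j : Fin N) :
    0 ≤ exp A i j := by
  have hsplit : A = (A + c • (1 : Matrix (Fin N) (Fin N) ℝ)) + (-c) • 1 := by
    rw [neg_smul]; abel
  have hcomm : Commute (A + c • (1 : Matrix (Fin N) (Fin N) ℝ))
      ((-c) • (1 : Matrix (Fin N) (Fin N) ℝ)) :=
    (Commute.one_right _).smul_right _
  have hexp1 : exp ((-c) • (1 : Matrix (Fin N) (Fin N) ℝ))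
      = Real.exp (-c) • (1 : Matrix (Fin N) (Fin N) ℝ) := by
    have h1 : ((-c) • (1 : Matrix (Fin N) (Fin N) ℝ)) = algebraMap ℝ _ (-c) := by
      rw [Algebra.algebraMap_eq_smul_one]
    erw [h1, ← algebraMap_exp_comm, Algebra.algebraMap_eq_smul_one, Real.exp_eq_exp_ℝ]
  calc (0:ℝ) ≤ Real.exp (-c) * exp (A + c • (1 : Matrix (Fin N) (Fin N) ℝ)) i j :=
        mul_nonneg (Real.exp_nonneg _) (exp_entry_nonneg hA i j)
    _ = exp A i j := by
        conv_rhs => rw [hsplit]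
        erw [exp_add_of_commute hcomm, hexp1, Matrix.mul_smul, Matrix.mul_one, Matrix.smul_apply,
          smul_eq_mul]
        rfl

lemma mexp_lap_entry_nonneg {ν h : ℝ} (hν : 0 < ν) {t : ℝ} (ht : 0 ≤ t) (i j : Fin N) :
    0 ≤ mexp (t • lap N ν h) i j := by
  rw [mexp_eq]
  apply exp_entry_nonneg_shift _ (2 * ν * t / h ^ 2)
  intro i j
  simp only [Matrix.add_apply, Matrix.smul_apply, Matrix.one_apply, lap, Matrix.of_apply,
    smul_eq_mul]
  have hd : 0 ≤ t * (ν / h ^ 2) := mul_nonneg ht (div_nonneg hν.le (sq_nonneg h))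
  by_cases hij : i = j
  · simp only [hij, if_pos rfl, if_true]
    have : t * (-2 * ν / h ^ 2) + 2 * ν * t / h ^ 2 * 1 = 0 := by ring
    linarith
  · simp only [if_neg hij]
    split
    · linarith
    · linarith


/-- The steady-state vector. -/
noncomputable def ust (N : ℕ) (K₁ K₂ : ℝ) : Fin N → ℝ := fun j =>
  ((N : ℝ) - (j : ℕ)) / (N + 1) * K₁ + (((j : ℕ) : ℝ) + 1) / (N + 1) * K₂

/-- The steady forcing vector. -/
noncomputable def Gv (N : ℕ) (ν h K₁ K₂ : ℝ) : Fin N → ℝ := fun j =>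
  (if (j : ℕ) = 0 then ν / h ^ 2 * K₁ else 0) + (if (j : ℕ) = N - 1 then ν / h ^ 2 * K₂ else 0)

lemma lap_apply_decomp (ν h : ℝ) (j l : Fin N) :
    lap N ν h j l = (if j = l then -2 * ν / h ^ 2 else 0)
      + (if (j : ℕ) + 1 = (l : ℕ) then ν / h ^ 2 else 0)
      + (if (l : ℕ) + 1 = (j : ℕ) then ν / h ^ 2 else 0) := by
  simp only [lap, Matrix.of_apply]
  rcases eq_or_ne j l with rfl | hjl
  · have h2 : ¬ ((j : ℕ) + 1 = (j : ℕ)) := by omega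
    simp [h2]
  · rw [if_neg hjl, if_neg hjl]
    by_cases h2 : (j : ℕ) + 1 = (l : ℕ)
    · have h3 : ¬ ((l : ℕ) + 1 = (j : ℕ)) := by omega
      rw [if_pos (Or.inl h2), if_pos h2, if_neg h3]
      ring
    · by_cases h3 : (l : ℕ) + 1 = (j : ℕ)
      · rw [if_pos (Or.inr h3), if_neg h2, if_pos h3]; ring
      · rw [if_neg (by tauto), if_neg h2, if_neg h3]; ring

lemma lap_mulVec (ν h : ℝ) (v : Fin N → ℝ) (j : Fin N) :
    (lap N ν h).mulVec v j
      = -2 * ν / h ^ 2 * v j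
        + (if hj : (j : ℕ) + 1 < N then ν / h ^ 2 * v ⟨(j : ℕ) + 1, hj⟩ else 0)
        + (if hj : 0 < (j : ℕ) then
            ν / h ^ 2 * v ⟨(j : ℕ) - 1, lt_of_le_of_lt (Nat.sub_le _ _) j.isLt⟩ else 0) := by
  have hre : ∀ l : Fin N, lap N ν h j l * v l
      = (if j = l then -2 * ν / h ^ 2 else 0) * v l
        + (if (j : ℕ) + 1 = (l : ℕ) then ν / h ^ 2 else 0) * v l
        + (if (l : ℕ) + 1 = (j : ℕ) then ν / h ^ 2 else 0) * v l := by
    intro l; rw [lap_apply_decomp]; ring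
  simp only [Matrix.mulVec, dotProduct, hre, Finset.sum_add_distrib]
  congr 1
  · congr 1
    · simp [ite_mul]
    · by_cases hj : (j : ℕ) + 1 < N
      · rw [dif_pos hj, Finset.sum_eq_single (⟨(j : ℕ) + 1, hj⟩ : Fin N)]
        · simp
        · intro b _ hb
          rw [if_neg, zero_mul]
          intro hc
          exact hb (Fin.ext hc.symm)
        · simp
      · rw [dif_neg hj]
        apply Finset.sum_eq_zero
        intro b _
        rw [if_neg, zero_mul]
        intro hc
        exact hj (hc ▸ b.isLt)
  · by_cases hj : 0 < (j : ℕ)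
    · rw [dif_pos hj,
        Finset.sum_eq_single (⟨(j : ℕ) - 1, lt_of_le_of_lt (Nat.sub_le _ _) j.isLt⟩ : Fin N)]
      · rw [if_pos (by simp; omega)]
      · intro b _ hb
        rw [if_neg, zero_mul]
        intro hc
        exact hb (Fin.ext (by simp; omega))
      · simp
    · rw [dif_neg hj]
      apply Finset.sum_eq_zero
      intro b _
      rw [if_neg, zero_mul]
      omega

lemma lap_mulVec_ust (hN : 2 ≤ N) (ν : ℝ) {h : ℝ} (hh : h ≠ 0) (K₁ K₂ : ℝ) (j : Fin N) :
    (lap N ν h).mulVec (ust N K₁ K₂) j = -(Gv N ν h K₁ K₂ j) := by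
  have hN1 : ((N : ℝ) + 1) ≠ 0 := by positivity
  have hh2 : h ^ 2 ≠ 0 := pow_ne_zero _ hh
  rw [lap_mulVec]
  simp only [ust, Gv]
  by_cases hj0 : (j : ℕ) = 0
  · have h1 : (j : ℕ) + 1 < N := by omega
    have h2 : ¬ (0 < (j : ℕ)) := by omega
    have h3 : ¬ ((j : ℕ) = N - 1) := by omega
    rw [dif_pos h1, dif_neg h2, if_pos hj0, if_neg h3]
    have hc0 : ((j : ℕ) : ℝ) = 0 := by exact_mod_cast hj0
    push_cast
    rw [hc0]
    field_simp
    ring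
  · by_cases hjN : (j : ℕ) = N - 1
    · have h1 : ¬ ((j : ℕ) + 1 < N) := by omega
      have h2 : 0 < (j : ℕ) := by omega
      rw [dif_neg h1, dif_pos h2, if_neg hj0, if_pos hjN]
      have hv : ((j : ℕ) - 1 : ℕ) = N - 2 := by omega
      have hc0 : ((j : ℕ) : ℝ) = (N : ℝ) - 1 := by
        rw [hjN]; push_cast [Nat.cast_sub (by omega : 1 ≤ N)]; ring
      have hc1 : (((j : ℕ) - 1 : ℕ) : ℝ) = (N : ℝ) - 2 := by
        rw [hv]; push_cast [Nat.cast_sub (by omega : 2 ≤ N)]; ring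
      simp only [hc1, hc0]
      field_simp
      ring
    · have h1 : (j : ℕ) + 1 < N := by omega
      have h2 : 0 < (j : ℕ) := by omega
      rw [dif_pos h1, dif_pos h2, if_neg hj0, if_neg hjN]
      have hc1 : (((j : ℕ) - 1 : ℕ) : ℝ) = ((j : ℕ) : ℝ) - 1 := by
        push_cast [Nat.cast_sub (by omega : 1 ≤ (j : ℕ))]; ring
      simp only [hc1]
      push_cast
      field_simp
      ring

lemma continuous_exp_comp (A : Matrix (Fin N) (Fin N) ℝ) (Δt : ℝ) :
    Continuous (fun s : ℝ => exp ((Δt - s) • A)) :=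
  exp_continuous.comp ((continuous_const.sub continuous_id).smul continuous_const)

lemma integral_mexp (A : Matrix (Fin N) (Fin N) ℝ) (w g : Fin N → ℝ)
    (hAg : A.mulVec w = -g) (Δt : ℝ) (j : Fin N) :
    ∫ s in (0:ℝ)..Δt, (mexp ((Δt - s) • A)).mulVec g j
      = w j - (mexp (Δt • A)).mulVec w j := by
  simp only [mexp_eq]
  have hderiv : ∀ s ∈ Set.uIcc (0:ℝ) Δt,
      HasDerivAt (fun s => mvCLM w j (exp ((Δt - s) • A)))
        ((exp ((Δt - s) • A)).mulVec g j) s := by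
    intro s _
    have h1 : HasDerivAt (fun u : ℝ => exp (u • A)) (exp ((Δt - s) • A) * A) (Δt - s) :=
      hasDerivAt_exp_smul_const A (Δt - s)
    have h2 : HasDerivAt (fun s : ℝ => Δt - s) (-1 : ℝ) s := by
      simpa using (hasDerivAt_id s).const_sub Δt
    have h3 := HasDerivAt.scomp s h1 h2
    have h4 := (mvCLM w j).hasFDerivAt.comp_hasDerivAt s h3
    refine h4.congr_deriv ?_
    symm
    erw [_root_.map_smul, mvCLM_apply, ← Matrix.mulVec_mulVec, hAg, Matrix.mulVec_neg]
    simp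
  have hcont : Continuous (fun s : ℝ => (exp ((Δt - s) • A)).mulVec g j) := by
    have hre : (fun s : ℝ => (exp ((Δt - s) • A)).mulVec g j)
        = fun s => mvCLM g j (exp ((Δt - s) • A)) := by funext s; simp
    rw [hre]
    exact (mvCLM g j).continuous.comp (continuous_exp_comp A Δt)
  rw [intervalIntegral.integral_eq_sub_of_hasDerivAt hderiv (hcont.intervalIntegrable _ _)]
  simp [sub_self, zero_smul, Matrix.one_mulVec, sub_zero]

end Stmt7

theorem stmt_7 (N : ℕ) (hN : 2 ≤ N) (ν h Δt : ℝ) (hν : 0 < ν) (hh : 0 < h) (hΔt : 0 < Δt)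
    (M : ℕ) (hM : 1 ≤ M) (T : ℝ) (hT : T = M * Δt)
    (ψ₁ ψ₂ : ℝ → ℝ) (hψ₁ : ContinuousOn ψ₁ (Set.Icc 0 T)) (hψ₂ : ContinuousOn ψ₂ (Set.Icc 0 T))
    (F : ℝ → Fin N → ℝ)
    (hF : ∀ t (j : Fin N), F t j = if (j : ℕ) = 0 then ν / h ^ 2 * ψ₁ t
        else if (j : ℕ) = N - 1 then ν / h ^ 2 * ψ₂ t else 0)
    (u : ℕ → Fin N → ℝ) (hu0 : ∀ j, u 0 j = 0)
    (hrec : ∀ m, m < M → ∀ j, u (m + 1) j =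
      (mexp (Δt • lap N ν h)).mulVec (u m) j
        + ∫ s in (0 : ℝ)..Δt, (mexp ((Δt - s) • lap N ν h)).mulVec (F (m * Δt + s)) j) :
    ∀ m, 1 ≤ m → m ≤ M → ∀ j : Fin N,
      |u m j| ≤ ((N : ℝ) - (j : ℕ)) / (N + 1) * sSup ((fun t => |ψ₁ t|) '' Set.Icc 0 T)
        + ((j : ℕ) + 1) / (N + 1) * sSup ((fun t => |ψ₂ t|) '' Set.Icc 0 T) := by
  have hh' : h ≠ 0 := ne_of_gt hh
  have hT0 : 0 < T := by
    rw [hT]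
    have hM0 : (0:ℝ) < M := by exact_mod_cast Nat.lt_of_lt_of_le Nat.zero_lt_one hM
    exact mul_pos hM0 hΔt
  set K₁ := sSup ((fun t => |ψ₁ t|) '' Set.Icc 0 T) with hK₁def
  set K₂ := sSup ((fun t => |ψ₂ t|) '' Set.Icc 0 T) with hK₂def
  have hb₁ : BddAbove ((fun t => |ψ₁ t|) '' Set.Icc 0 T) :=
    (isCompact_Icc.image_of_continuousOn hψ₁.abs).bddAbove
  have hb₂ : BddAbove ((fun t => |ψ₂ t|) '' Set.Icc 0 T) :=
    (isCompact_Icc.image_of_continuousOn hψ₂.abs).bddAbove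
  have hK₁b : ∀ t ∈ Set.Icc (0:ℝ) T, |ψ₁ t| ≤ K₁ := fun t ht => le_csSup hb₁ ⟨t, ht, rfl⟩
  have hK₂b : ∀ t ∈ Set.Icc (0:ℝ) T, |ψ₂ t| ≤ K₂ := fun t ht => le_csSup hb₂ ⟨t, ht, rfl⟩
  have hK₁0 : 0 ≤ K₁ := le_trans (abs_nonneg _) (hK₁b 0 ⟨le_refl 0, hT0.le⟩)
  have hK₂0 : 0 ≤ K₂ := le_trans (abs_nonneg _) (hK₂b 0 ⟨le_refl 0, hT0.le⟩)
  have hust0 : ∀ l : Fin N, 0 ≤ Stmt7.ust N K₁ K₂ l := by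
    intro l
    have hl : ((l : ℕ) : ℝ) ≤ (N : ℝ) := by exact_mod_cast l.isLt.le
    apply add_nonneg
    · exact mul_nonneg (div_nonneg (by linarith) (by positivity)) hK₁0
    · exact mul_nonneg (div_nonneg (by positivity) (by positivity)) hK₂0
  have hAg : (lap N ν h).mulVec (Stmt7.ust N K₁ K₂) = -(Stmt7.Gv N ν h K₁ K₂) := by
    funext l
    rw [Pi.neg_apply]
    exact Stmt7.lap_mulVec_ust hN ν hh' K₁ K₂ l
  have hcnn : (0:ℝ) ≤ ν / h ^ 2 := le_of_lt (div_pos hν (by positivity))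
  have hGabs : ∀ t ∈ Set.Icc (0:ℝ) T, ∀ k : Fin N,
      F t k ≤ Stmt7.Gv N ν h K₁ K₂ k ∧ -(Stmt7.Gv N ν h K₁ K₂ k) ≤ F t k := by
    intro t ht k
    rw [hF]
    simp only [Stmt7.Gv]
    by_cases hk0 : (k : ℕ) = 0
    · have hkN : ¬ ((k : ℕ) = N - 1) := by omega
      rw [if_pos hk0, if_pos hk0, if_neg hkN, add_zero]
      have h1 := hK₁b t ht
      have h2 : ν / h ^ 2 * ψ₁ t ≤ ν / h ^ 2 * K₁ :=
        mul_le_mul_of_nonneg_left (le_trans (le_abs_self _) h1) hcnn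
      have h3 : ν / h ^ 2 * (-K₁) ≤ ν / h ^ 2 * ψ₁ t :=
        mul_le_mul_of_nonneg_left (by linarith [neg_abs_le (ψ₁ t)]) hcnn
      constructor
      · exact h2
      · nlinarith [h3]
    · rw [if_neg hk0, if_neg hk0, zero_add]
      by_cases hkN : (k : ℕ) = N - 1
      · rw [if_pos hkN, if_pos hkN]
        have h1 := hK₂b t ht
        have h2 : ν / h ^ 2 * ψ₂ t ≤ ν / h ^ 2 * K₂ :=
          mul_le_mul_of_nonneg_left (le_trans (le_abs_self _) h1) hcnn
        have h3 : ν / h ^ 2 * (-K₂) ≤ ν / h ^ 2 * ψ₂ t :=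
          mul_le_mul_of_nonneg_left (by linarith [neg_abs_le (ψ₂ t)]) hcnn
        constructor
        · exact h2
        · nlinarith [h3]
      · rw [if_neg hkN, if_neg hkN]
        norm_num
  have habs : ∀ m, m ≤ M → ∀ l : Fin N, |u m l| ≤ Stmt7.ust N K₁ K₂ l := by
    intro m
    induction m with
    | zero =>
      intro _ l
      rw [hu0 l]
      simpa using hust0 l
    | succ m ih =>
      intro hm l
      have hmM : m < M := Nat.lt_of_succ_le hm
      have ihm := ih hmM.le
      have hEpos : ∀ i k : Fin N, 0 ≤ mexp (Δt • lap N ν h) i k := fun i k =>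
        Stmt7.mexp_lap_entry_nonneg hν hΔt.le i k
      have hE2 : ∀ s ∈ Set.Icc (0:ℝ) Δt, ∀ i k : Fin N,
          0 ≤ mexp ((Δt - s) • lap N ν h) i k :=
        fun s hs i k => Stmt7.mexp_lap_entry_nonneg hν (by linarith [hs.2]) i k
      have hmem : Set.MapsTo (fun s : ℝ => (m : ℝ) * Δt + s) (Set.Icc 0 Δt) (Set.Icc 0 T) := by
        intro s hs
        obtain ⟨hs0, hs1⟩ := hs
        have hm1 : (m : ℝ) + 1 ≤ (M : ℝ) := by exact_mod_cast Nat.succ_le_of_lt hmM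
        have h0 : (0:ℝ) ≤ (m : ℝ) * Δt := mul_nonneg (Nat.cast_nonneg m) hΔt.le
        have hub : (m : ℝ) * Δt + s ≤ T := by
          rw [hT]; nlinarith [mul_le_mul_of_nonneg_right hm1 hΔt.le]
        exact ⟨show (0:ℝ) ≤ (m : ℝ) * Δt + s by linarith, hub⟩
      have hFTC := Stmt7.integral_mexp (lap N ν h) _ _ hAg Δt l
      -- integrability of the G-integrand
      have hcontG : Continuous (fun s : ℝ =>
          (mexp ((Δt - s) • lap N ν h)).mulVec (Stmt7.Gv N ν h K₁ K₂) l) := by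
        have hre : (fun s : ℝ =>
            (mexp ((Δt - s) • lap N ν h)).mulVec (Stmt7.Gv N ν h K₁ K₂) l)
            = fun s => Stmt7.mvCLM (Stmt7.Gv N ν h K₁ K₂) l
                (NormedSpace.exp ((Δt - s) • lap N ν h)) := by
          funext s; simp [Stmt7.mexp_eq]
        rw [hre]
        exact (Stmt7.mvCLM _ _).continuous.comp (Stmt7.continuous_exp_comp _ _)
      have hintG : IntervalIntegrable (fun s : ℝ =>
          (mexp ((Δt - s) • lap N ν h)).mulVec (Stmt7.Gv N ν h K₁ K₂) l)
          MeasureTheory.volume 0 Δt := hcontG.intervalIntegrable 0 Δt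
      -- integrability of the F-integrand
      have hcF : ∀ k : Fin N, ContinuousOn (fun s : ℝ => F ((m : ℝ) * Δt + s) k)
          (Set.Icc 0 Δt) := by
        intro k
        have hre : (fun s : ℝ => F ((m : ℝ) * Δt + s) k) = fun s =>
            (if (k : ℕ) = 0 then ν / h ^ 2 * ψ₁ ((m : ℝ) * Δt + s)
              else if (k : ℕ) = N - 1 then ν / h ^ 2 * ψ₂ ((m : ℝ) * Δt + s) else 0) :=
          funext fun s => hF _ k
        rw [hre]
        have hcomp : ContinuousOn (fun s : ℝ => (m : ℝ) * Δt + s) (Set.Icc 0 Δt) :=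
          (continuous_const.add continuous_id).continuousOn
        split_ifs
        · exact continuousOn_const.mul (ContinuousOn.comp hψ₁ hcomp hmem)
        · exact continuousOn_const.mul (ContinuousOn.comp hψ₂ hcomp hmem)
        · exact continuousOn_const
      have hintF : IntervalIntegrable (fun s : ℝ =>
          (mexp ((Δt - s) • lap N ν h)).mulVec (F ((m : ℝ) * Δt + s)) l)
          MeasureTheory.volume 0 Δt := by
        apply ContinuousOn.intervalIntegrable
        rw [Set.uIcc_of_le hΔt.le]
        have hre : (fun s : ℝ => (mexp ((Δt - s) • lap N ν h)).mulVec (F ((m : ℝ) * Δt + s)) l)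
            = fun s => ∑ k, (mexp ((Δt - s) • lap N ν h)) l k * F ((m : ℝ) * Δt + s) k := by
          funext s; simp [Matrix.mulVec, dotProduct]
        rw [hre]
        apply continuousOn_finset_sum
        intro k _
        have hcE : ContinuousOn (fun s : ℝ => (mexp ((Δt - s) • lap N ν h)) l k)
            (Set.Icc 0 Δt) := by
          have hre2 : (fun s : ℝ => (mexp ((Δt - s) • lap N ν h)) l k)
              = fun s => Stmt7.entryCLM l k (NormedSpace.exp ((Δt - s) • lap N ν h)) := by
            funext s; simp [Stmt7.mexp_eq]
          rw [hre2]
          exact ((Stmt7.entryCLM l k).continuous.comp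
            (Stmt7.continuous_exp_comp _ _)).continuousOn
        exact hcE.mul (hcF k)
      -- pointwise comparisons
      have hptle : ∀ s ∈ Set.Icc (0:ℝ) Δt,
          (mexp ((Δt - s) • lap N ν h)).mulVec (F ((m : ℝ) * Δt + s)) l
            ≤ (mexp ((Δt - s) • lap N ν h)).mulVec (Stmt7.Gv N ν h K₁ K₂) l := by
        intro s hs
        simp only [Matrix.mulVec, dotProduct]
        exact Finset.sum_le_sum fun k _ => mul_le_mul_of_nonneg_left
          ((hGabs _ (hmem hs) k).1) (hE2 s hs l k)
      have hptge : ∀ s ∈ Set.Icc (0:ℝ) Δt,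
          -((mexp ((Δt - s) • lap N ν h)).mulVec (Stmt7.Gv N ν h K₁ K₂) l)
            ≤ (mexp ((Δt - s) • lap N ν h)).mulVec (F ((m : ℝ) * Δt + s)) l := by
        intro s hs
        simp only [Matrix.mulVec, dotProduct]
        rw [← Finset.sum_neg_distrib]
        apply Finset.sum_le_sum
        intro k _
        have h1 := mul_le_mul_of_nonneg_left ((hGabs _ (hmem hs) k).2) (hE2 s hs l k)
        nlinarith [h1]
      have hIle : (∫ s in (0:ℝ)..Δt,
            (mexp ((Δt - s) • lap N ν h)).mulVec (F ((m : ℝ) * Δt + s)) l)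
          ≤ ∫ s in (0:ℝ)..Δt,
            (mexp ((Δt - s) • lap N ν h)).mulVec (Stmt7.Gv N ν h K₁ K₂) l :=
        intervalIntegral.integral_mono_on hΔt.le hintF hintG hptle
      have hIge : (∫ s in (0:ℝ)..Δt,
            -((mexp ((Δt - s) • lap N ν h)).mulVec (Stmt7.Gv N ν h K₁ K₂) l))
          ≤ ∫ s in (0:ℝ)..Δt,
            (mexp ((Δt - s) • lap N ν h)).mulVec (F ((m : ℝ) * Δt + s)) l :=
        intervalIntegral.integral_mono_on hΔt.le hintG.neg hintF hptge
      have hIneg : (∫ s in (0:ℝ)..Δt,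
            -((mexp ((Δt - s) • lap N ν h)).mulVec (Stmt7.Gv N ν h K₁ K₂) l))
          = -∫ s in (0:ℝ)..Δt,
            (mexp ((Δt - s) • lap N ν h)).mulVec (Stmt7.Gv N ν h K₁ K₂) l :=
        intervalIntegral.integral_neg
      have hMle : (mexp (Δt • lap N ν h)).mulVec (u m) l
          ≤ (mexp (Δt • lap N ν h)).mulVec (Stmt7.ust N K₁ K₂) l := by
        simp only [Matrix.mulVec, dotProduct]
        exact Finset.sum_le_sum fun k _ =>
          mul_le_mul_of_nonneg_left ((abs_le.mp (ihm k)).2) (hEpos l k)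
      have hMge : -((mexp (Δt • lap N ν h)).mulVec (Stmt7.ust N K₁ K₂) l)
          ≤ (mexp (Δt • lap N ν h)).mulVec (u m) l := by
        simp only [Matrix.mulVec, dotProduct]
        rw [← Finset.sum_neg_distrib]
        apply Finset.sum_le_sum
        intro k _
        have h1 := mul_le_mul_of_nonneg_left ((abs_le.mp (ihm k)).1) (hEpos l k)
        nlinarith [h1]
      rw [hrec m hmM l, abs_le]
      constructor
      · linarith [hFTC, hIge, hIneg, hMge]
      · linarith [hFTC, hIle, hMle]
  intro m hm1 hm2 j
  have := habs m hm2 j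
  simpa only [Stmt7.ust] using this
end

section
/- Under the hypotheses of the discrete maximum principle, if instead |u_{m+1}(j)| ≤ |(e^{Δt A} u_m + ∫₀^{Δt} e^{(Δt-s)A} F(t_m+s) ds)(j)| + C for a constant C ≥ 0 and u₀ = 0, then |u_m(j)| ≤ ((N+1-j)/(N+1))|ψ₁|_T + (j/(N+1))|ψ₂|_T + mC for all 1 ≤ j ≤ N and 1 ≤ m ≤ M. -/
open Matrix NormedSpace

lemma mexp_eq_exp {N : ℕ} (A : Matrix (Fin N) (Fin N) ℝ) : mexp A = exp A := by
  letI : SeminormedRing (Matrix (Fin N) (Fin N) ℝ) := Matrix.linftyOpSemiNormedRing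
  letI : NormedRing (Matrix (Fin N) (Fin N) ℝ) := Matrix.linftyOpNormedRing
  letI : NormedAlgebra ℝ (Matrix (Fin N) (Fin N) ℝ) := Matrix.linftyOpNormedAlgebra
  rw [exp_eq_tsum ℝ, mexp]

lemma pow_entry_nonneg {N : ℕ} {B : Matrix (Fin N) (Fin N) ℝ} (hB : ∀ i j, 0 ≤ B i j) :
    ∀ (k : ℕ) (i j : Fin N), 0 ≤ (B ^ k) i j := by
  intro k
  induction k with
  | zero => intro i j; by_cases hij : i = j <;> simp [pow_zero, Matrix.one_apply, hij]
  | succ n ih =>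
    intro i j
    rw [pow_succ, Matrix.mul_apply]
    exact Finset.sum_nonneg fun k _ => mul_nonneg (ih i k) (hB k j)

lemma exp_entry_nonneg {N : ℕ} {B : Matrix (Fin N) (Fin N) ℝ} (hB : ∀ i j, 0 ≤ B i j)
    (i j : Fin N) : 0 ≤ exp B i j := by
  letI : SeminormedRing (Matrix (Fin N) (Fin N) ℝ) := Matrix.linftyOpSemiNormedRing
  letI : NormedRing (Matrix (Fin N) (Fin N) ℝ) := Matrix.linftyOpNormedRing
  letI : NormedAlgebra ℝ (Matrix (Fin N) (Fin N) ℝ) := Matrix.linftyOpNormedAlgebra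
  have hs : HasSum (fun k : ℕ => ((k.factorial : ℝ))⁻¹ • B ^ k) (exp B) :=
    exp_series_hasSum_exp' B
  have h1 : HasSum (fun k : ℕ => (((k.factorial : ℝ))⁻¹ • B ^ k) i j) (exp B i j) :=
    Pi.hasSum.mp (Pi.hasSum.mp hs i) j
  refine hasSum_le (fun k => ?_) hasSum_zero h1
  have : (((k.factorial : ℝ))⁻¹ • B ^ k) i j = ((k.factorial : ℝ))⁻¹ * (B ^ k) i j := rfl
  rw [this]
  exact mul_nonneg (by positivity) (pow_entry_nonneg hB k i j)

/-- the off-diagonal part of lap -/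
noncomputable def lapB (N : ℕ) (ν h : ℝ) : Matrix (Fin N) (Fin N) ℝ :=
  Matrix.of fun i j =>
    if (i : ℕ) + 1 = (j : ℕ) ∨ (j : ℕ) + 1 = (i : ℕ) then ν / h ^ 2 else 0

lemma lap_decomp (N : ℕ) (ν h : ℝ) (t : ℝ) :
    t • lap N ν h = Matrix.diagonal (fun _ => t * (-2 * ν / h ^ 2)) + t • lapB N ν h := by
  ext i j
  by_cases hij : i = j
  · subst hij
    simp [lap, lapB, Matrix.diagonal]
  · simp [lap, lapB, Matrix.diagonal, hij]

lemma mexp_lap_nonneg (N : ℕ) (ν h : ℝ) (hν : 0 < ν) (hh : 0 < h) (t : ℝ) (ht : 0 ≤ t)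
    (i j : Fin N) : 0 ≤ mexp (t • lap N ν h) i j := by
  rw [mexp_eq_exp, lap_decomp]
  have hcomm : Commute (Matrix.diagonal (fun _ : Fin N => t * (-2 * ν / h ^ 2)))
      (t • lapB N ν h) := by
    have : Matrix.diagonal (fun _ : Fin N => t * (-2 * ν / h ^ 2))
        = (t * (-2 * ν / h ^ 2)) • (1 : Matrix (Fin N) (Fin N) ℝ) := by
      rw [Matrix.smul_one_eq_diagonal]
    rw [this]
    exact ((Commute.one_left (t • lapB N ν h)).smul_left _)
  rw [Matrix.exp_add_of_commute _ _ hcomm]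
  have hdiag : exp (Matrix.diagonal (fun _ : Fin N => t * (-2 * ν / h ^ 2)))
      = Matrix.diagonal (fun _ => Real.exp (t * (-2 * ν / h ^ 2))) := by
    rw [Matrix.exp_diagonal]
    congr 1
    rw [Pi.exp_def, Real.exp_eq_exp_ℝ]
  rw [hdiag, Matrix.diagonal_mul]
  have hB : ∀ i j, 0 ≤ (t • lapB N ν h) i j := by
    intro i j
    simp only [Matrix.smul_apply, lapB, Matrix.of_apply, smul_eq_mul]
    split
    · positivity
    · simp
  exact mul_nonneg (Real.exp_nonneg _) (exp_entry_nonneg hB i j)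

section deriv
variable {N : ℕ}

lemma hasDerivAt_sub_const' (Δt s : ℝ) : HasDerivAt (fun x : ℝ => Δt - x) (-1 : ℝ) s := by
  simpa using (hasDerivAt_id s).const_sub Δt

set_option maxHeartbeats 2000000

lemma hasDerivAt_exp_entry (A : Matrix (Fin N) (Fin N) ℝ) {f : ℝ → ℝ} {f' s : ℝ}
    (hf : HasDerivAt f f' s) (i j : Fin N) :
    HasDerivAt (fun s => exp (f s • A) i j) (f' • (exp (f s • A) * A) i j) s := by
  letI : SeminormedRing (Matrix (Fin N) (Fin N) ℝ) := Matrix.linftyOpSemiNormedRing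
  letI : NormedRing (Matrix (Fin N) (Fin N) ℝ) := Matrix.linftyOpNormedRing
  letI : NormedAlgebra ℝ (Matrix (Fin N) (Fin N) ℝ) := Matrix.linftyOpNormedAlgebra
  have h1 : HasDerivAt (fun u : ℝ => exp (u • A)) (exp (f s • A) * A) (f s) :=
    hasDerivAt_exp_smul_const A (f s)
  have h3 : HasDerivAt (fun s => exp (f s • A)) (f' • (exp (f s • A) * A)) s :=
    h1.scomp s hf
  let L : Matrix (Fin N) (Fin N) ℝ →ₗ[ℝ] ℝ :=
    (LinearMap.proj j).comp (LinearMap.proj (R := ℝ) (φ := fun _ : Fin N => Fin N → ℝ) i)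
  have h4 := (L.toContinuousLinearMap.hasFDerivAt).comp_hasDerivAt s h3
  exact h4

lemma hasDerivAt_mexp_mulVec (A : Matrix (Fin N) (Fin N) ℝ) {f : ℝ → ℝ} {f' s : ℝ}
    (hf : HasDerivAt f f' s) (v : Fin N → ℝ) (j : Fin N) :
    HasDerivAt (fun s => (mexp (f s • A)).mulVec v j)
      (f' * (mexp (f s • A)).mulVec (A.mulVec v) j) s := by
  simp only [mexp_eq_exp]
  have key : ∀ s, (exp (f s • A)).mulVec v j = ∑ k, exp (f s • A) j k * v k := by
    intro s; rfl
  simp only [key]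
  have h2 : (exp (f s • A)).mulVec (A.mulVec v) j
      = ((exp (f s • A)) * A).mulVec v j := by rw [Matrix.mulVec_mulVec]
  rw [h2]
  have h4 : ((exp (f s • A)) * A).mulVec v j = ∑ k, (exp (f s • A) * A) j k * v k := rfl
  rw [h4, Finset.mul_sum]
  apply HasDerivAt.fun_sum
  intro k _
  have h5 := (hasDerivAt_exp_entry A hf j k).mul_const (v k)
  convert h5 using 1
  · rfl
  simp only [smul_eq_mul]; ring
end deriv

set_option maxHeartbeats 2000000 in
lemma _dummy : True := trivial

section ftc
variable {N : ℕ} (A : Matrix (Fin N) (Fin N) ℝ) (Δt : ℝ)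

set_option maxHeartbeats 2000000 in
lemma cont_mexp_mulVec (v : Fin N → ℝ) (j : Fin N) :
    Continuous fun s => (mexp ((Δt - s) • A)).mulVec v j := by
  rw [continuous_iff_continuousAt]
  intro s
  exact (hasDerivAt_mexp_mulVec A (hasDerivAt_sub_const' Δt s) v j).continuousAt

set_option maxHeartbeats 2000000 in
lemma cont_mexp_entry (i j : Fin N) :
    Continuous fun s => mexp ((Δt - s) • A) i j := by
  rw [continuous_iff_continuousAt]
  intro s
  have := (hasDerivAt_exp_entry A (hasDerivAt_sub_const' Δt s) i j).continuousAt
  simpa only [mexp_eq_exp] using this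

set_option maxHeartbeats 2000000 in
lemma ftc_mexp (v : Fin N → ℝ) (j : Fin N) :
    ∫ s in (0:ℝ)..Δt, (mexp ((Δt - s) • A)).mulVec (A.mulVec v) j
      = (mexp (Δt • A)).mulVec v j - v j := by
  have hd : ∀ s ∈ Set.uIcc (0:ℝ) Δt,
      HasDerivAt (fun s => -((mexp ((Δt - s) • A)).mulVec v j))
        ((mexp ((Δt - s) • A)).mulVec (A.mulVec v) j) s := by
    intro s _
    have hh := (hasDerivAt_mexp_mulVec A (hasDerivAt_sub_const' Δt s) v j).fun_neg
    simpa [neg_mul, one_mul, neg_neg] using hh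
  have hint : IntervalIntegrable
      (fun s => (mexp ((Δt - s) • A)).mulVec (A.mulVec v) j) MeasureTheory.volume 0 Δt :=
    (cont_mexp_mulVec A Δt (A.mulVec v) j).intervalIntegrable 0 Δt
  rw [intervalIntegral.integral_eq_sub_of_hasDerivAt hd hint]
  have h0 : (Δt - Δt) • A = (0 : Matrix (Fin N) (Fin N) ℝ) := by simp
  have h1 : (Δt - 0) • A = Δt • A := by simp
  rw [h0, h1]
  have : mexp (0 : Matrix (Fin N) (Fin N) ℝ) = 1 := by
    rw [mexp_eq_exp]; exact exp_zero
  rw [this, Matrix.one_mulVec]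
  ring
end ftc

lemma lap_mulVec {N : ℕ} (ν h : ℝ) (v : Fin N → ℝ) (j : Fin N) :
    (lap N ν h).mulVec v j =
      ν / h ^ 2 * ((if hj : (j : ℕ) + 1 < N then v ⟨(j : ℕ) + 1, hj⟩ else 0)
        + (if hj : 0 < (j : ℕ) then v ⟨(j : ℕ) - 1,
            Nat.lt_of_le_of_lt (Nat.sub_le _ _) j.isLt⟩ else 0)
        - 2 * v j) := by
  have hmv : (lap N ν h).mulVec v j = ∑ k, lap N ν h j k * v k := rfl
  rw [hmv]
  have hterm : ∀ k : Fin N, lap N ν h j k * v k =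
      (if j = k then -2 * ν / h ^ 2 * v k else 0)
      + (if (j : ℕ) + 1 = (k : ℕ) then ν / h ^ 2 * v k else 0)
      + (if (k : ℕ) + 1 = (j : ℕ) then ν / h ^ 2 * v k else 0) := by
    intro k
    have hentry : lap N ν h j k = if j = k then -2 * ν / h ^ 2
        else if (j : ℕ) + 1 = (k : ℕ) ∨ (k : ℕ) + 1 = (j : ℕ) then ν / h ^ 2 else 0 := rfl
    rw [hentry]
    by_cases h1 : j = k
    · have h2 : ¬((j : ℕ) + 1 = (k : ℕ)) := by omega
      have h3 : ¬((k : ℕ) + 1 = (j : ℕ)) := by subst h1; omega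
      rw [if_pos h1, if_pos h1, if_neg h2, if_neg h3]; ring
    · rw [if_neg h1]
      by_cases h2 : (j : ℕ) + 1 = (k : ℕ)
      · have h3 : ¬((k : ℕ) + 1 = (j : ℕ)) := by omega
        rw [if_pos (Or.inl h2), if_neg h1, if_pos h2, if_neg h3]; ring
      · by_cases h3 : (k : ℕ) + 1 = (j : ℕ)
        · rw [if_pos (Or.inr h3), if_neg h1, if_neg h2, if_pos h3]; ring
        · rw [if_neg (by tauto), if_neg h1, if_neg h2, if_neg h3]; ring
  rw [Finset.sum_congr rfl fun k _ => hterm k]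
  rw [Finset.sum_add_distrib, Finset.sum_add_distrib]
  have e1 : ∑ k : Fin N, (if j = k then -2 * ν / h ^ 2 * v k else 0) = -2 * ν / h ^ 2 * v j := by
    rw [Finset.sum_ite_eq]; simp
  have e2 : ∑ k : Fin N, (if (j : ℕ) + 1 = (k : ℕ) then ν / h ^ 2 * v k else 0)
      = if hj : (j : ℕ) + 1 < N then ν / h ^ 2 * v ⟨(j : ℕ) + 1, hj⟩ else 0 := by
    by_cases hj : (j : ℕ) + 1 < N
    · rw [dif_pos hj]
      have : ∀ k : Fin N, ((j : ℕ) + 1 = (k : ℕ)) ↔ ((⟨(j : ℕ) + 1, hj⟩ : Fin N) = k) := by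
        intro k; simp [Fin.ext_iff]
      rw [Finset.sum_congr rfl fun k _ => by rw [if_congr (this k) rfl rfl]]
      rw [Finset.sum_ite_eq]; simp
    · rw [dif_neg hj]
      apply Finset.sum_eq_zero
      intro k _
      rw [if_neg (by omega)]
  have e3 : ∑ k : Fin N, (if (k : ℕ) + 1 = (j : ℕ) then ν / h ^ 2 * v k else 0)
      = if hj : 0 < (j : ℕ) then ν / h ^ 2 * v ⟨(j : ℕ) - 1,
          Nat.lt_of_le_of_lt (Nat.sub_le _ _) j.isLt⟩ else 0 := by
    by_cases hj : 0 < (j : ℕ)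
    · rw [dif_pos hj]
      have : ∀ k : Fin N, ((k : ℕ) + 1 = (j : ℕ)) ↔
          ((⟨(j : ℕ) - 1, Nat.lt_of_le_of_lt (Nat.sub_le _ _) j.isLt⟩ : Fin N) = k) := by
        intro k; simp only [Fin.ext_iff]; omega
      rw [Finset.sum_congr rfl fun k _ => by rw [if_congr (this k) rfl rfl]]
      rw [Finset.sum_ite_eq]; simp
    · rw [dif_neg hj]
      apply Finset.sum_eq_zero
      intro k _
      rw [if_neg (by omega)]
  rw [e1, e2, e3]
  split_ifs <;> ring

lemma lap_mulVec_w {N : ℕ} (hN : 2 ≤ N) (ν h : ℝ) (hh : h ≠ 0) (M₁ M₂ : ℝ) (j : Fin N) :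
    (lap N ν h).mulVec
      (fun k => ((N : ℝ) - (k : ℕ)) / (N + 1) * M₁ + ((k : ℕ) + 1) / (N + 1) * M₂) j
    = -(if (j : ℕ) = 0 then ν / h ^ 2 * M₁
        else if (j : ℕ) = N - 1 then ν / h ^ 2 * M₂ else 0) := by
  have hN1 : ((N : ℝ) + 1) ≠ 0 := by positivity
  rw [lap_mulVec]
  by_cases h0 : (j : ℕ) = 0
  · have hlt : (j : ℕ) + 1 < N := by omega
    rw [dif_pos hlt, dif_neg (by omega), if_pos h0]
    dsimp only
    have hj0 : ((j : ℕ) : ℝ) = 0 := by rw [h0]; norm_num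
    push_cast
    rw [hj0]
    have hh2 : h ^ 2 ≠ 0 := pow_ne_zero 2 hh
    field_simp
    ring
  · by_cases h2 : (j : ℕ) = N - 1
    · have h1le : 1 ≤ (j : ℕ) := by omega
      rw [dif_neg (by omega), dif_pos (by omega), if_neg h0, if_pos h2]
      dsimp only
      have hj : ((j : ℕ) : ℝ) = (N : ℝ) - 1 := by
        rw [h2]; push_cast [Nat.cast_sub (by omega : 1 ≤ N)]; ring
      push_cast [Nat.cast_sub h1le]
      rw [hj]
      have hh2 : h ^ 2 ≠ 0 := pow_ne_zero 2 hh
      field_simp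
      ring
    · have h1le : 1 ≤ (j : ℕ) := by omega
      have hlt : (j : ℕ) + 1 < N := by omega
      rw [dif_pos hlt, dif_pos (by omega), if_neg h0, if_neg h2]
      dsimp only
      push_cast [Nat.cast_sub h1le]
      have hh2 : h ^ 2 ≠ 0 := pow_ne_zero 2 hh
      field_simp
      ring

lemma lap_mulVec_one {N : ℕ} (hN : 2 ≤ N) {ν h : ℝ} (hν : 0 < ν) (hh : 0 < h) (j : Fin N) :
    (lap N ν h).mulVec (fun _ => (1 : ℝ)) j ≤ 0 := by
  rw [lap_mulVec]
  have hpos : 0 < ν / h ^ 2 := by positivity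
  split_ifs <;> nlinarith [hpos]

lemma abs_mulVec_le {N : ℕ} {P : Matrix (Fin N) (Fin N) ℝ} {x y : Fin N → ℝ} (j : Fin N)
    (hP : ∀ k, 0 ≤ P j k) (hxy : ∀ k, |x k| ≤ y k) :
    |P.mulVec x j| ≤ P.mulVec y j := by
  have h1 : P.mulVec x j = ∑ k, P j k * x k := rfl
  have h2 : P.mulVec y j = ∑ k, P j k * y k := rfl
  rw [h1, h2]
  calc |∑ k, P j k * x k| ≤ ∑ k, |P j k * x k| := Finset.abs_sum_le_sum_abs _ _
    _ ≤ ∑ k, P j k * y k := by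
        apply Finset.sum_le_sum
        intro k _
        rw [abs_mul, abs_of_nonneg (hP k)]
        exact mul_le_mul_of_nonneg_left (hxy k) (hP k)

theorem stmt_8 (N : ℕ) (hN : 2 ≤ N) (ν h Δt : ℝ) (hν : 0 < ν) (hh : 0 < h) (hΔt : 0 < Δt)
    (M : ℕ) (hM : 1 ≤ M) (T : ℝ) (hT : T = M * Δt)
    (ψ₁ ψ₂ : ℝ → ℝ) (hψ₁ : ContinuousOn ψ₁ (Set.Icc 0 T)) (hψ₂ : ContinuousOn ψ₂ (Set.Icc 0 T))
    (F : ℝ → Fin N → ℝ)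
    (hF : ∀ t (j : Fin N), F t j = if (j : ℕ) = 0 then ν / h ^ 2 * ψ₁ t
        else if (j : ℕ) = N - 1 then ν / h ^ 2 * ψ₂ t else 0)
    (C : ℝ) (hC : 0 ≤ C)
    (u : ℕ → Fin N → ℝ) (hu0 : ∀ j, u 0 j = 0)
    (hrec : ∀ m, m < M → ∀ j, |u (m + 1) j| ≤
      |(mexp (Δt • lap N ν h)).mulVec (u m) j
        + ∫ s in (0 : ℝ)..Δt, (mexp ((Δt - s) • lap N ν h)).mulVec (F (m * Δt + s)) j| + C) :
    ∀ m, 1 ≤ m → m ≤ M → ∀ j : Fin N,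
      |u m j| ≤ ((N : ℝ) - (j : ℕ)) / (N + 1) * sSup ((fun t => |ψ₁ t|) '' Set.Icc 0 T)
        + ((j : ℕ) + 1) / (N + 1) * sSup ((fun t => |ψ₂ t|) '' Set.Icc 0 T) + m * C := by
  set A : Matrix (Fin N) (Fin N) ℝ := lap N ν h with hA
  set M₁ : ℝ := sSup ((fun t => |ψ₁ t|) '' Set.Icc 0 T) with hM₁
  set M₂ : ℝ := sSup ((fun t => |ψ₂ t|) '' Set.Icc 0 T) with hM₂
  set w : Fin N → ℝ :=
    fun k => ((N : ℝ) - (k : ℕ)) / (N + 1) * M₁ + ((k : ℕ) + 1) / (N + 1) * M₂ with hw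
  set Fb : Fin N → ℝ := fun k => if (k : ℕ) = 0 then ν / h ^ 2 * M₁
      else if (k : ℕ) = N - 1 then ν / h ^ 2 * M₂ else 0 with hFb
  have hT0 : 0 < T := by rw [hT]; positivity
  have h0T : (0 : ℝ) ∈ Set.Icc 0 T := ⟨le_refl _, hT0.le⟩
  -- boundedness of sSup
  have hbdd1 : BddAbove ((fun t => |ψ₁ t|) '' Set.Icc 0 T) :=
    (isCompact_Icc.image_of_continuousOn hψ₁.abs).bddAbove
  have hbdd2 : BddAbove ((fun t => |ψ₂ t|) '' Set.Icc 0 T) :=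
    (isCompact_Icc.image_of_continuousOn hψ₂.abs).bddAbove
  have hle1 : ∀ t ∈ Set.Icc (0:ℝ) T, |ψ₁ t| ≤ M₁ := fun t ht =>
    le_csSup hbdd1 ⟨t, ht, rfl⟩
  have hle2 : ∀ t ∈ Set.Icc (0:ℝ) T, |ψ₂ t| ≤ M₂ := fun t ht =>
    le_csSup hbdd2 ⟨t, ht, rfl⟩
  have hM1nn : 0 ≤ M₁ := le_trans (abs_nonneg _) (hle1 0 h0T)
  have hM2nn : 0 ≤ M₂ := le_trans (abs_nonneg _) (hle2 0 h0T)
  have hNr : (0:ℝ) < (N : ℝ) + 1 := by positivity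
  -- w is nonneg
  have hwnn : ∀ j : Fin N, 0 ≤ w j := by
    intro j
    have hjN : ((j : ℕ) : ℝ) ≤ (N : ℝ) := by
      exact_mod_cast le_of_lt j.isLt
    have c1 : 0 ≤ ((N : ℝ) - (j : ℕ)) / (N + 1) := by
      apply div_nonneg (by linarith) hNr.le
    have c2 : 0 ≤ ((j : ℕ) + 1 : ℝ) / (N + 1) := by positivity
    exact add_nonneg (mul_nonneg c1 hM1nn) (mul_nonneg c2 hM2nn)
  -- |F t k| ≤ Fb k on [0, T]
  have hFle : ∀ t ∈ Set.Icc (0:ℝ) T, ∀ k : Fin N, |F t k| ≤ Fb k := by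
    intro t ht k
    have hFbk : Fb k = if (k : ℕ) = 0 then ν / h ^ 2 * M₁
        else if (k : ℕ) = N - 1 then ν / h ^ 2 * M₂ else 0 := rfl
    rw [hF, hFbk]
    by_cases hk0 : (k : ℕ) = 0
    · rw [if_pos hk0, if_pos hk0, abs_mul, abs_of_nonneg (by positivity : (0:ℝ) ≤ ν / h ^ 2)]
      exact mul_le_mul_of_nonneg_left (hle1 t ht) (by positivity)
    · rw [if_neg hk0, if_neg hk0]
      by_cases hk1 : (k : ℕ) = N - 1
      · rw [if_pos hk1, if_pos hk1, abs_mul,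
          abs_of_nonneg (by positivity : (0:ℝ) ≤ ν / h ^ 2)]
        exact mul_le_mul_of_nonneg_left (hle2 t ht) (by positivity)
      · rw [if_neg hk1, if_neg hk1, abs_zero]
  -- Fb is nonneg
  have hFbnn : ∀ k : Fin N, 0 ≤ Fb k := fun k =>
    le_trans (abs_nonneg _) (hFle 0 h0T k)
  -- key FTC identity: ∫ mexp((Δt-s)•A) Fb = w - E w
  have hkey : ∀ j : Fin N, (∫ s in (0:ℝ)..Δt, (mexp ((Δt - s) • A)).mulVec Fb j)
      = w j - (mexp (Δt • A)).mulVec w j := by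
    intro j
    have hAw : A.mulVec w = fun j => -Fb j := by
      funext j
      rw [hA, hw, lap_mulVec_w hN ν h (ne_of_gt hh) M₁ M₂ j, hFb]
    have := ftc_mexp A Δt w j
    rw [hAw] at this
    have hneg : ∀ s : ℝ, (mexp ((Δt - s) • A)).mulVec (fun j => -Fb j) j
        = -((mexp ((Δt - s) • A)).mulVec Fb j) := by
      intro s
      have : (fun j => -Fb j) = -Fb := rfl
      rw [this, Matrix.mulVec_neg]
      rfl
    simp only [hneg] at this
    rw [intervalIntegral.integral_neg] at this
    linarith
  -- row sums of E at most 1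
  have hone : ∀ j : Fin N, (mexp (Δt • A)).mulVec (fun _ => (1:ℝ)) j ≤ 1 := by
    intro j
    have := ftc_mexp A Δt (fun _ => (1:ℝ)) j
    have hip : ∫ s in (0:ℝ)..Δt,
        (mexp ((Δt - s) • A)).mulVec (A.mulVec (fun _ => (1:ℝ))) j ≤ 0 := by
      have hnn : ∀ s ∈ Set.Icc (0:ℝ) Δt,
          (mexp ((Δt - s) • A)).mulVec (A.mulVec (fun _ => (1:ℝ))) j ≤ 0 := by
        intro s hs
        have hent : ∀ i k : Fin N, 0 ≤ mexp ((Δt - s) • A) i k := by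
          intro i k
          exact mexp_lap_nonneg N ν h hν hh (Δt - s) (by linarith [hs.2]) i k
        have h1 : (mexp ((Δt - s) • A)).mulVec (A.mulVec (fun _ => (1:ℝ))) j
            = ∑ k, mexp ((Δt - s) • A) j k * (A.mulVec (fun _ => (1:ℝ))) k := rfl
        rw [h1]
        apply Finset.sum_nonpos
        intro k _
        exact mul_nonpos_of_nonneg_of_nonpos (hent j k) (lap_mulVec_one hN hν hh k)
      have hint : IntervalIntegrable
          (fun s => (mexp ((Δt - s) • A)).mulVec (A.mulVec (fun _ => (1:ℝ))) j)
          MeasureTheory.volume 0 Δt :=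
        (cont_mexp_mulVec A Δt (A.mulVec (fun _ => (1:ℝ))) j).intervalIntegrable 0 Δt
      have hz : IntervalIntegrable (fun _ : ℝ => (0:ℝ)) MeasureTheory.volume 0 Δt :=
        intervalIntegrable_const
      have := intervalIntegral.integral_mono_on hΔt.le hint hz hnn
      simpa using this
    linarith [this, hip]
  -- main induction
  have main : ∀ m : ℕ, m ≤ M → ∀ j : Fin N, |u m j| ≤ w j + m * C := by
    intro m
    induction m with
    | zero =>
      intro _ j
      rw [hu0 j]
      simp only [abs_zero, Nat.cast_zero, zero_mul, add_zero]
      exact hwnn j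
    | succ n ih =>
      intro hm j
      have hnM : n < M := by omega
      have ihn : ∀ k : Fin N, |u n k| ≤ w k + n * C := ih (by omega)
      -- comparison fn integrable, plus pointwise bound
      have hcompint : IntervalIntegrable (fun s => (mexp ((Δt - s) • A)).mulVec Fb j)
          MeasureTheory.volume 0 Δt :=
        (cont_mexp_mulVec A Δt Fb j).intervalIntegrable 0 Δt
      have hmem : ∀ s ∈ Set.Icc (0:ℝ) Δt, (n : ℝ) * Δt + s ∈ Set.Icc (0:ℝ) T := by
        intro s hs
        constructor
        · have : (0:ℝ) ≤ (n : ℝ) * Δt := by positivity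
          linarith [hs.1]
        · have hn1 : ((n : ℝ) + 1) * Δt ≤ (M : ℝ) * Δt := by
            apply mul_le_mul_of_nonneg_right _ hΔt.le
            exact_mod_cast hnM
          rw [hT]
          nlinarith [hs.2]
      have hptle : ∀ s ∈ Set.Icc (0:ℝ) Δt,
          |(mexp ((Δt - s) • A)).mulVec (F ((n : ℝ) * Δt + s)) j|
            ≤ (mexp ((Δt - s) • A)).mulVec Fb j := by
        intro s hs
        apply abs_mulVec_le j
        · intro k
          exact mexp_lap_nonneg N ν h hν hh (Δt - s) (by linarith [hs.2]) j k
        · intro k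
          exact hFle _ (hmem s hs) k
      -- integrability of the actual integrand
      have hFcont : ∀ k : Fin N, ContinuousOn (fun s => F ((n : ℝ) * Δt + s) k)
          (Set.Icc (0:ℝ) Δt) := by
        intro k
        have hshift : ContinuousOn (fun s : ℝ => (n : ℝ) * Δt + s) (Set.Icc (0:ℝ) Δt) :=
          (continuous_const.add continuous_id).continuousOn
        by_cases hk0 : (k : ℕ) = 0
        · have : (fun s => F ((n : ℝ) * Δt + s) k)
              = fun s => ν / h ^ 2 * ψ₁ ((n : ℝ) * Δt + s) := by
            funext s; rw [hF, if_pos hk0]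
          rw [this]
          exact continuousOn_const.mul (hψ₁.comp hshift hmem)
        · by_cases hk1 : (k : ℕ) = N - 1
          · have : (fun s => F ((n : ℝ) * Δt + s) k)
                = fun s => ν / h ^ 2 * ψ₂ ((n : ℝ) * Δt + s) := by
              funext s; rw [hF, if_neg hk0, if_pos hk1]
            rw [this]
            exact continuousOn_const.mul (hψ₂.comp hshift hmem)
          · have : (fun s => F ((n : ℝ) * Δt + s) k) = fun _ => (0:ℝ) := by
              funext s; rw [hF, if_neg hk0, if_neg hk1]
            rw [this]
            exact continuousOn_const
      have hintF : IntervalIntegrable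
          (fun s => (mexp ((Δt - s) • A)).mulVec (F ((n : ℝ) * Δt + s)) j)
          MeasureTheory.volume 0 Δt := by
        apply ContinuousOn.intervalIntegrable
        rw [Set.uIcc_of_le hΔt.le]
        have heq : (fun s => (mexp ((Δt - s) • A)).mulVec (F ((n : ℝ) * Δt + s)) j)
            = fun s => ∑ k, mexp ((Δt - s) • A) j k * F ((n : ℝ) * Δt + s) k := rfl
        rw [heq]
        apply continuousOn_finset_sum
        intro k _
        exact ((cont_mexp_entry A Δt j k).continuousOn).mul (hFcont k)
      -- bound the integral term
      have hIbd : |∫ s in (0:ℝ)..Δt, (mexp ((Δt - s) • A)).mulVec (F ((n : ℝ) * Δt + s)) j|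
          ≤ w j - (mexp (Δt • A)).mulVec w j := by
        rw [← hkey j]
        rw [abs_le]
        constructor
        · have hcompint' : IntervalIntegrable
              (fun s => -((mexp ((Δt - s) • A)).mulVec Fb j)) MeasureTheory.volume 0 Δt :=
            hcompint.neg
          have h5 := intervalIntegral.integral_mono_on hΔt.le hcompint' hintF
            (fun s hs => neg_le_of_abs_le (hptle s hs))
          rw [intervalIntegral.integral_neg] at h5
          linarith
        · exact intervalIntegral.integral_mono_on hΔt.le hintF hcompint
            (fun s hs => le_of_abs_le (hptle s hs))
      -- bound the propagation term
      have hEbd : |(mexp (Δt • A)).mulVec (u n) j|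
          ≤ (mexp (Δt • A)).mulVec w j + (n : ℝ) * C := by
        have h1 : |(mexp (Δt • A)).mulVec (u n) j|
            ≤ (mexp (Δt • A)).mulVec (fun k => w k + n * C) j := by
          apply abs_mulVec_le j
          · intro k
            exact mexp_lap_nonneg N ν h hν hh Δt hΔt.le j k
          · exact ihn
        have h2 : (mexp (Δt • A)).mulVec (fun k => w k + n * C) j
            = (mexp (Δt • A)).mulVec w j
              + (n : ℝ) * C * (mexp (Δt • A)).mulVec (fun _ => (1:ℝ)) j := by
          have e1 : (mexp (Δt • A)).mulVec (fun k => w k + n * C) j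
              = ∑ k, mexp (Δt • A) j k * (w k + n * C) := rfl
          have e2 : (mexp (Δt • A)).mulVec w j = ∑ k, mexp (Δt • A) j k * w k := rfl
          have e3 : (mexp (Δt • A)).mulVec (fun _ => (1:ℝ)) j
              = ∑ k, mexp (Δt • A) j k * 1 := rfl
          rw [e1, e2, e3, Finset.mul_sum, ← Finset.sum_add_distrib]
          apply Finset.sum_congr rfl
          intro k _
          ring
        have h3 : (n : ℝ) * C * (mexp (Δt • A)).mulVec (fun _ => (1:ℝ)) j
            ≤ (n : ℝ) * C * 1 := by
          apply mul_le_mul_of_nonneg_left (hone j) (by positivity)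
        rw [h2] at h1
        linarith
      calc |u (n + 1) j| ≤ |(mexp (Δt • A)).mulVec (u n) j
            + ∫ s in (0:ℝ)..Δt, (mexp ((Δt - s) • A)).mulVec (F ((n : ℝ) * Δt + s)) j| + C :=
              hrec n hnM j
        _ ≤ |(mexp (Δt • A)).mulVec (u n) j|
            + |∫ s in (0:ℝ)..Δt, (mexp ((Δt - s) • A)).mulVec (F ((n : ℝ) * Δt + s)) j| + C := by
              have := abs_add_le ((mexp (Δt • A)).mulVec (u n) j)
                (∫ s in (0:ℝ)..Δt, (mexp ((Δt - s) • A)).mulVec (F ((n : ℝ) * Δt + s)) j)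
              linarith
        _ ≤ ((mexp (Δt • A)).mulVec w j + (n : ℝ) * C)
            + (w j - (mexp (Δt • A)).mulVec w j) + C := by
              linarith [hEbd, hIbd]
        _ = w j + ((n : ℕ) + 1 : ℕ) * C := by push_cast; ring
  intro m _ hm j
  exact main m hm j
end
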